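/- arXiv:1405.1964 — 3 statements merged into one kernel-verified Lean document; each statement's English description precedes it below -/
import Mathlib

section
/- In the linear-pricing power scheduling game where each player n chooses a starting slot for a load of fixed per-slot power p_n over d_n consecutive slots, the function Φ(I) = ∑_{t∈T} [ c_min·y_t + (s/2)·(y_t² + ∑_{n∈N} y_{nt}²) ] is an exact potential: for every player n and every unilateral deviation, Φ changes by exactly the change in P_n = ∑_t y_{nt}·(c_min + s·y_t). -/
open Finset

/-- Per-slot demand of player `n` when he starts his load (fixed per-slot power `p n`,
duration `d n` consecutive slots) at slot `σ n`. -/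
def loadDemand {N : Type*} (τ : ℕ) (p : N → ℝ) (d : N → ℕ)
    (σ : N → ℕ) (n : N) (t : Fin τ) : ℝ :=
  if σ n ≤ (t : ℕ) ∧ (t : ℕ) < σ n + d n then p n else 0

/-- In the linear-pricing power scheduling game (each player chooses a starting slot
for a load of fixed per-slot power over consecutive slots), the function
`Φ(I) = ∑_t [ c_min·y_t + (s/2)·(y_t² + ∑_n y_{nt}²) ]` is an exact potential:
for any unilateral deviation of player `n`, the change in `Φ` equals the change in
`P_n = ∑_t y_{nt}·(c_min + s·y_t)`. -/
theorem linear_pricing_exact_potential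
    (N : Type*) [Fintype N] [DecidableEq N] (τ : ℕ)
    (cmin s : ℝ) (hc : 0 ≤ cmin) (hs : 0 < s)
    (p : N → ℝ) (hp : ∀ n, 0 ≤ p n) (d : N → ℕ)
    (σ σ' : N → ℕ) (n : N) (hdev : ∀ m, m ≠ n → σ' m = σ m) :
    (∑ t : Fin τ, (cmin * (∑ m, loadDemand τ p d σ' m t) +
        s / 2 * ((∑ m, loadDemand τ p d σ' m t) ^ 2 +
          ∑ m, (loadDemand τ p d σ' m t) ^ 2))) -
    (∑ t : Fin τ, (cmin * (∑ m, loadDemand τ p d σ m t) +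
        s / 2 * ((∑ m, loadDemand τ p d σ m t) ^ 2 +
          ∑ m, (loadDemand τ p d σ m t) ^ 2))) =
    (∑ t : Fin τ, loadDemand τ p d σ' n t *
        (cmin + s * ∑ m, loadDemand τ p d σ' m t)) -
    (∑ t : Fin τ, loadDemand τ p d σ n t *
        (cmin + s * ∑ m, loadDemand τ p d σ m t)) := by
  rw [← Finset.sum_sub_distrib, ← Finset.sum_sub_distrib]
  refine Finset.sum_congr rfl fun t _ => ?_
  have hrest : ∀ f : N → ℝ → ℝ,
      (∑ m ∈ univ.erase n, f m (loadDemand τ p d σ' m t)) =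
      (∑ m ∈ univ.erase n, f m (loadDemand τ p d σ m t)) := by
    intro f
    refine Finset.sum_congr rfl fun m hm => ?_
    have : σ' m = σ m := hdev m (Finset.ne_of_mem_erase hm)
    simp [loadDemand, this]
  have split : ∀ ρ : N → ℕ, ∀ f : N → ℝ → ℝ,
      (∑ m, f m (loadDemand τ p d ρ m t)) =
      f n (loadDemand τ p d ρ n t) + ∑ m ∈ univ.erase n, f m (loadDemand τ p d ρ m t) := by
    intro ρ f
    rw [← Finset.sum_erase_add _ _ (Finset.mem_univ n)]
    ring
  rw [split σ' (fun _ x => x), split σ (fun _ x => x),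
      split σ' (fun _ x => x ^ 2), split σ (fun _ x => x ^ 2),
      hrest (fun _ x => x), hrest (fun _ x => x ^ 2)]
  ring
end

section
/- In the power scheduling game where each player n carries a load of fixed power p occupying exactly one slot, prices are c(y) with c strictly increasing and y·c(y) convex, and all players have full flexibility (any slot in T allowed), every pure Nash equilibrium demand profile (y_t)_{t∈T} satisfies max_t y_t − min_t y_t ≤ p. -/
open Set Finset

/-- In the single-slot scheduling game where `N` players each place a load of identical
power `p > 0` into one slot of the finite set `T` (full flexibility), with strictly
increasing price `c` and convex total payment `y·c(y)`, every pure Nash equilibrium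
demand profile has spread at most `p`: `max_t y_t − min_t y_t ≤ p`. -/
theorem NE_demand_spread_le_load
    (N T : Type*) [Fintype N] [Fintype T] [Nonempty T] [DecidableEq T]
    (p : ℝ) (hp : 0 < p)
    (c : ℝ → ℝ)
    (hmono : StrictMonoOn c (Ici 0))
    (hconv : ConvexOn ℝ (Ici 0) (fun y => y * c y))
    (σ : N → T)
    (y : T → ℝ)
    (hy : ∀ t, y t = p * ((Finset.univ.filter (fun n : N => σ n = t)).card : ℝ))
    (hNE : ∀ t t' : T, (∃ n, σ n = t) → c (y t) ≤ c (y t' + p)) :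
    ∀ t t' : T, y t - y t' ≤ p := by
  intro t t'
  have hy0 : ∀ s : T, 0 ≤ y s := fun s => by
    rw [hy s]; positivity
  by_cases h : ∃ n, σ n = t
  · have hc := hNE t t' h
    by_contra hgt
    push_neg at hgt
    have h1 : y t' + p < y t := by linarith
    have := hmono (by simp [Set.mem_Ici]; linarith [hy0 t', hp.le]) (Set.mem_Ici.2 (hy0 t)) h1
    linarith
  · -- no player at t, so y t = 0
    have : (Finset.univ.filter (fun n : N => σ n = t)).card = 0 := by
      rw [Finset.card_eq_zero, Finset.filter_eq_empty_iff]
      intro n _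
      exact fun hn => h ⟨n, hn⟩
    have hyt : y t = 0 := by rw [hy t, this]; simp
    have := hy0 t'
    linarith
end

section
/- Under the assumptions of the previous setting (identical unit loads of power p, strictly increasing price c, full flexibility), every pure Nash equilibrium of the scheduling game minimizes the social cost ∑_{t∈T} y_t·c(y_t) over all feasible assignments, provided y ↦ y·c(y) is convex; i.e., the price of anarchy is 1. -/
open Set Finset

/-!
Since `c` is strictly increasing, no player in an equilibrium can face a strictly higher load
than the least loaded slot would give after moving there, so the equilibrium counts take only
two values `a` and `a + 1`. The function `f y = y * c y` then agrees at every equilibrium load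
with its chord through `p * a` and `p * (a + 1)`, while every load `p * m` of an arbitrary
assignment lies outside the open interval between these points, where the convex `f` lies on or
above the chord. The chord is affine and the total load `p * |N|` does not depend on the
assignment, so summing over the slots gives the claim.
-/

theorem ConvexOn.add_slope_mul_sub_le {s : Set ℝ} {f : ℝ → ℝ} (hf : ConvexOn ℝ s f) {a b x : ℝ}
    (ha : a ∈ s) (hb : b ∈ s) (hx : x ∈ s) (hab : a < b) (hxab : x ∉ Ioo a b) :
    f a + slope f a b * (x - a) ≤ f x := by
  rw [slope_def_field]
  rcases lt_trichotomy x a with hxa | rfl | hax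
  · have hsec := mul_le_mul_of_nonpos_right
      (hf.secant_mono ha hx hb hxa.ne hab.ne' (by linarith)) (sub_nonpos.2 hxa.le)
    rw [div_mul_cancel₀ _ (sub_ne_zero.2 hxa.ne)] at hsec
    linarith
  · simp
  · have hbx : b ≤ x := not_lt.1 fun hxb => hxab ⟨hax, hxb⟩
    have hsec := mul_le_mul_of_nonneg_right
      (hf.secant_mono ha hb hx hab.ne' hax.ne' hbx) (sub_nonneg.2 hax.le)
    rw [div_mul_cancel₀ _ (sub_ne_zero.2 hax.ne')] at hsec
    linarith

theorem ConvexOn.sum_le_sum_of_forall_eq_or_eq_succ {ι : Type*} [Fintype ι] {f : ℝ → ℝ}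
    (hf : ConvexOn ℝ (Ici 0) f) {p : ℝ} (hp : 0 < p) {k m : ι → ℕ} {a : ℕ}
    (hk : ∀ i, k i = a ∨ k i = a + 1) (hkm : ∑ i, k i = ∑ i, m i) :
    ∑ i, f (p * k i) ≤ ∑ i, f (p * m i) := by
  set A : ℝ := p * a
  set B : ℝ := p * (a + 1)
  have hAB : A < B := by simp only [A, B]; linarith
  have hA : A ∈ Ici (0 : ℝ) := mem_Ici.2 (by positivity)
  have hB : B ∈ Ici (0 : ℝ) := mem_Ici.2 (by positivity)
  set L : ℝ → ℝ := fun x => f A + slope f A B * (x - A)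
  have sum_L : ∀ u : ι → ℝ,
      ∑ i, L (u i) = Fintype.card ι * f A + slope f A B * (∑ i, u i - Fintype.card ι * A) := by
    intro u
    simp only [L, sum_add_distrib, ← mul_sum, sum_sub_distrib, sum_const, card_univ, nsmul_eq_mul]
  have on_chord : ∀ i, f (p * k i) = L (p * k i) := by
    intro i
    rcases hk i with h | h
    · simp [h, L, A]
    · have := sub_smul_slope f A B
      simp only [h, L, B, smul_eq_mul, vsub_eq_sub, Nat.cast_add, Nat.cast_one] at this ⊢
      linarith
  have above_chord : ∀ i, L (p * m i) ≤ f (p * m i) := by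
    intro i
    refine hf.add_slope_mul_sub_le hA hB (mem_Ici.2 (by positivity)) hAB fun hmi => ?_
    have : (a : ℝ) < m i ∧ (m i : ℝ) < a + 1 :=
      ⟨lt_of_mul_lt_mul_left hmi.1 hp.le, lt_of_mul_lt_mul_left hmi.2 hp.le⟩
    norm_cast at this
    omega
  have hsum : ∑ i, p * (k i : ℝ) = ∑ i, p * (m i : ℝ) := by
    simp only [← mul_sum]
    exact_mod_cast congrArg (p * ·) (congrArg (Nat.cast : ℕ → ℝ) hkm)
  calc ∑ i, f (p * k i) = ∑ i, L (p * k i) := sum_congr rfl fun i _ => on_chord i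
    _ = ∑ i, L (p * m i) := by rw [sum_L, sum_L, hsum]
    _ ≤ ∑ i, f (p * m i) := sum_le_sum fun i _ => above_chord i

theorem exists_forall_eq_or_eq_succ_of_le_add_one {ι : Type*} [Finite ι] {k : ι → ℕ}
    (h : ∀ i j, k i ≤ k j + 1) : ∃ a, ∀ i, k i = a ∨ k i = a + 1 := by
  cases isEmpty_or_nonempty ι
  · exact ⟨0, isEmptyElim⟩
  · obtain ⟨j, hj⟩ := Finite.exists_min k
    exact ⟨k j, fun i => by have := hj i; have := h i j; omega⟩

theorem le_add_one_of_le_of_strictMonoOn {c : ℝ → ℝ} (hc : StrictMonoOn c (Ici 0)) {p : ℝ}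
    (hp : 0 < p) {k l : ℕ} (h : c (p * k) ≤ c (p * l + p)) : k ≤ l + 1 := by
  have hle := (hc.le_iff_le (mem_Ici.2 (by positivity)) (mem_Ici.2 (by positivity))).1 h
  rw [← mul_add_one] at hle
  exact_mod_cast le_of_mul_le_mul_left hle hp

theorem NE_minimizes_social_cost_general
    (N T : Type*) [Fintype N] [Fintype T] [DecidableEq T]
    (p : ℝ) (hp : 0 < p)
    (c : ℝ → ℝ)
    (hmono : StrictMonoOn c (Ici 0))
    (hconv : ConvexOn ℝ (Ici 0) (fun y => y * c y))
    (σ : N → T)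
    (y : (N → T) → T → ℝ)
    (hy : ∀ (τ : N → T) (t : T),
      y τ t = p * ((Finset.univ.filter (fun n : N => τ n = t)).card : ℝ))
    (hNE : ∀ t t' : T, (∃ n, σ n = t) → c (y σ t) ≤ c (y σ t' + p)) :
    ∀ σ' : N → T, ∑ t, y σ t * c (y σ t) ≤ ∑ t, y σ' t * c (y σ' t) := by
  intro σ'
  set k : (N → T) → T → ℕ := fun τ t => #{n | τ n = t}
  have hyk : ∀ τ t, y τ t = p * k τ t := hy
  have sum_k : ∀ τ, ∑ t, k τ t = Fintype.card N :=
    fun τ => (card_eq_sum_card_fiberwise fun n _ => mem_univ (τ n)).symm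
  have count_le_count_add_one : ∀ t t', k σ t ≤ k σ t' + 1 := by
    intro t t'
    rcases Nat.eq_zero_or_pos (k σ t) with h0 | hpos
    · omega
    obtain ⟨n, hn⟩ := card_pos.1 hpos
    refine le_add_one_of_le_of_strictMonoOn hmono hp ?_
    simpa only [hyk] using hNE t t' ⟨n, (mem_filter.1 hn).2⟩
  obtain ⟨a, ha⟩ := exists_forall_eq_or_eq_succ_of_le_add_one count_le_count_add_one
  simp only [hyk]
  exact hconv.sum_le_sum_of_forall_eq_or_eq_succ hp ha ((sum_k σ).trans (sum_k σ').symm)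

/-- Price of anarchy 1: with identical unit loads of power `p > 0`, strictly increasing
price `c`, convex total payment `y·c(y)` and full flexibility, every pure Nash
equilibrium of the scheduling game minimizes the social cost `∑_t y_t·c(y_t)` over all
feasible assignments. -/
theorem NE_minimizes_social_cost
    (N T : Type*) [Fintype N] [Fintype T] [Nonempty T] [DecidableEq T]
    (p : ℝ) (hp : 0 < p)
    (c : ℝ → ℝ)
    (hmono : StrictMonoOn c (Ici 0))
    (hconv : ConvexOn ℝ (Ici 0) (fun y => y * c y))
    (σ : N → T)
    (y : (N → T) → T → ℝ)
    (hy : ∀ (τ : N → T) (t : T),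
      y τ t = p * ((Finset.univ.filter (fun n : N => τ n = t)).card : ℝ))
    (hNE : ∀ t t' : T, (∃ n, σ n = t) → c (y σ t) ≤ c (y σ t' + p)) :
    ∀ σ' : N → T, ∑ t, y σ t * c (y σ t) ≤ ∑ t, y σ' t * c (y σ' t) :=
  NE_minimizes_social_cost_general N T p hp c hmono hconv σ y hy hNE
end
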